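/- Let Q be a finite quiver with involution σ and duality structure (s, τ), and let θ : ℤ^{Q_0} → ℤ be a σ-compatible stability. Every self-dual representation M of Q admits a unique σ-Harder–Narasimhan filtration: there is exactly one chain of isotropic subrepresentations 0 = U_0 ⊂ U_1 ⊂ ⋯ ⊂ U_r ⊂ M (with r ≥ 0 and all inclusions U_{k−1} ⊂ U_k strict) such that each subquotient U_k/U_{k−1} (k = 1,…,r) is semistable, μ(U_1/U_0) > μ(U_2/U_1) > ⋯ > μ(U_r/U_{r−1}) > 0, and the self-dual representation M//U_r is σ-semistable if it is nonzero. Uniqueness includes the uniqueness of the length r. -/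

import Mathlib

open scoped BigOperators

/-- A finite quiver. -/
structure FinQuiver where
  V : Type
  A : Type
  [fintypeV : Fintype V]
  [fintypeA : Fintype A]
  [decEqV : DecidableEq V]
  [decEqA : DecidableEq A]
  src : A → V
  tgt : A → V

attribute [instance] FinQuiver.fintypeV FinQuiver.fintypeA FinQuiver.decEqV FinQuiver.decEqA

/-- A finite-dimensional complex representation of a quiver. -/
structure QRep (Q : FinQuiver) where
  carrier : Q.V → Type
  [acg : ∀ i, AddCommGroup (carrier i)]
  [mod : ∀ i, Module ℂ (carrier i)]
  [fd : ∀ i, FiniteDimensional ℂ (carrier i)]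
  map : ∀ a : Q.A, carrier (Q.src a) →ₗ[ℂ] carrier (Q.tgt a)

attribute [instance] QRep.acg QRep.mod QRep.fd

namespace QRep

variable {Q : FinQuiver}

/-- A family of subspaces of a representation. -/
abbrev SubFam (X : QRep Q) := ∀ i, Submodule ℂ (X.carrier i)

/-- The family of subspaces is a subrepresentation: it is stable under all structure maps. -/
def IsSubRep (X : QRep Q) (V : X.SubFam) : Prop :=
  ∀ a : Q.A, ∀ x ∈ V (Q.src a), X.map a x ∈ V (Q.tgt a)

/-- Dimension vector (with values in `ℤ`) of a family of subspaces. -/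
noncomputable def dimZ {X : QRep Q} (V : X.SubFam) : Q.V → ℤ :=
  fun i => (Module.finrank ℂ (V i) : ℤ)

/-- Dimension vector (with values in `ℤ`) of a representation. -/
noncomputable def dimVecZ (X : QRep Q) : Q.V → ℤ :=
  fun i => (Module.finrank ℂ (X.carrier i) : ℤ)

/-- The slope of a dimension vector with respect to a stability `θ`. -/
noncomputable def slope (θ : (Q.V → ℤ) →+ ℤ) (d : Q.V → ℤ) : ℚ :=
  (θ d : ℚ) / ((∑ i, d i : ℤ) : ℚ)

/-- A representation is semistable when every nonzero subrepresentation has slope at most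
the slope of the representation. -/
def Semistable (θ : (Q.V → ℤ) →+ ℤ) (X : QRep Q) : Prop :=
  ∀ V : X.SubFam, X.IsSubRep V → V ≠ ⊥ → slope θ (dimZ V) ≤ slope θ X.dimVecZ

/-- Cast along an equality of vertices. -/
def castEquiv (X : QRep Q) {i j : Q.V} (h : i = j) : X.carrier i ≃ₗ[ℂ] X.carrier j := by
  subst h; exact LinearEquiv.refl ℂ _

end QRep

/-- An involution of a quiver. -/
structure QInv (Q : FinQuiver) where
  onV : Q.V → Q.V
  onA : Q.A → Q.A
  invV : ∀ i, onV (onV i) = i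
  invA : ∀ a, onA (onA a) = a
  src_onA : ∀ a, Q.src (onA a) = onV (Q.tgt a)
  tgt_onA : ∀ a, Q.tgt (onA a) = onV (Q.src a)
  fix_onA : ∀ a, Q.tgt a = onV (Q.src a) → onA a = a

/-- A duality structure on a quiver with involution. -/
structure Duality (Q : FinQuiver) (σ : QInv Q) where
  s : Q.V → ℤ
  τ : Q.A → ℤ
  s_pm : ∀ i, s i = 1 ∨ s i = -1
  τ_pm : ∀ a, τ a = 1 ∨ τ a = -1
  s_inv : ∀ i, s (σ.onV i) = s i
  ττ : ∀ a, τ a * τ (σ.onA a) = s (Q.src a) * s (Q.tgt a)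

namespace QRep

variable {Q : FinQuiver}

/-- A stability is σ-compatible if `θ ∘ σ = -θ`. -/
def SigmaCompatible (σ : QInv Q) (θ : (Q.V → ℤ) →+ ℤ) : Prop :=
  ∀ d : Q.V → ℤ, θ (fun i => d (σ.onV i)) = - θ d

/-- The dual representation `S(U)`, with `S(U)_i = (U_{σ(i)})^*` and
`S(u)_α = τ_α ⬝ (u_{σ(α)})^∨`. -/
noncomputable def dualRep (σ : QInv Q) (D : Duality Q σ) (X : QRep Q) : QRep Q where
  carrier := fun i => Module.Dual ℂ (X.carrier (σ.onV i))
  map := fun a => (D.τ a : ℂ) •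
    (((X.castEquiv (σ.src_onA a)).dualMap.symm.toLinearMap).comp
      (((X.map (σ.onA a)).dualMap).comp
        ((X.castEquiv (σ.tgt_onA a)).dualMap.toLinearMap)))

end QRep

namespace QRep

variable {Q : FinQuiver}

/-- Bilinear forms on the total space `⊕ᵢ Xᵢ` of a representation. -/
abbrev Bilin (X : QRep Q) := (∀ i, X.carrier i) →ₗ[ℂ] (∀ i, X.carrier i) →ₗ[ℂ] ℂ

/-- Nondegeneracy of a bilinear form. -/
def Nondeg (X : QRep Q) (B : X.Bilin) : Prop := ∀ x, (∀ y, B x y = 0) → x = 0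

/-- Condition (i) for a self-dual representation: `M_i` and `M_j` are orthogonal
unless `i = σ(j)` (equivalently `j = σ(i)`). -/
def sdOrthBlocks (σ : QInv Q) (X : QRep Q) (B : X.Bilin) : Prop :=
  ∀ i j, j ≠ σ.onV i → ∀ (x : X.carrier i) (y : X.carrier j),
    B (Pi.single i x) (Pi.single j y) = 0

/-- Condition (ii) for a self-dual representation: `⟨x, x'⟩ = s_i ⟨x', x⟩` on
`M_i + M_{σ(i)}`. -/
def sdSymm (σ : QInv Q) (D : Duality Q σ) (X : QRep Q) (B : X.Bilin) : Prop :=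
  ∀ i (x : X.carrier i) (y : X.carrier (σ.onV i)),
    B (Pi.single i x) (Pi.single (σ.onV i) y)
      = (D.s i : ℂ) * B (Pi.single (σ.onV i) y) (Pi.single i x)

/-- Condition (iii) for a self-dual representation: `⟨m_α x, x'⟩ = τ_α ⟨x, m_{σ(α)} x'⟩`. -/
def sdArrow (σ : QInv Q) (D : Duality Q σ) (X : QRep Q) (B : X.Bilin) : Prop :=
  ∀ (a : Q.A) (x : X.carrier (Q.src a)) (y : X.carrier (σ.onV (Q.tgt a))),
    B (Pi.single (Q.tgt a) (X.map a x)) (Pi.single (σ.onV (Q.tgt a)) y)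
      = (D.τ a : ℂ) * B (Pi.single (Q.src a) x)
          (Pi.single (Q.tgt (σ.onA a)) (X.map (σ.onA a) (X.castEquiv (σ.src_onA a).symm y)))

/-- The bilinear form `B` makes `X` a self-dual representation. -/
def IsSelfDualForm (σ : QInv Q) (D : Duality Q σ) (X : QRep Q) (B : X.Bilin) : Prop :=
  Nondeg X B ∧ sdOrthBlocks σ X B ∧ sdSymm σ D X B ∧ sdArrow σ D X B

/-- The orthogonal `U^⊥` of a family of subspaces:
`U^⊥_i = {m ∈ M_i : ⟨m, x⟩ = 0 for all x ∈ U_{σ(i)}}`. -/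
noncomputable def orthFam (σ : QInv Q) (X : QRep Q) (B : X.Bilin) (U : X.SubFam) : X.SubFam :=
  fun i => ⨅ y : (U (σ.onV i)),
    LinearMap.ker ((B.comp (LinearMap.single ℂ X.carrier i)).flip
      (Pi.single (σ.onV i) (y : X.carrier (σ.onV i))))

/-- A family of subspaces is isotropic if `U ≤ U^⊥`. -/
def IsotropicFam (σ : QInv Q) (X : QRep Q) (B : X.Bilin) (U : X.SubFam) : Prop :=
  U ≤ orthFam σ X B U

/-- σ-semistability of a self-dual representation: every nonzero isotropic
subrepresentation has slope at most `0`. -/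
def SigmaSemistable (σ : QInv Q) (θ : (Q.V → ℤ) →+ ℤ) (X : QRep Q) (B : X.Bilin) : Prop :=
  ∀ U : X.SubFam, X.IsSubRep U → IsotropicFam σ X B U → U ≠ ⊥ → slope θ (dimZ U) ≤ 0

end QRep

namespace QRep

variable {Q : FinQuiver}

/-- Semistability of the subquotient `W/V` of a representation `X` (for `V ≤ W`):
every subrepresentation `Y` with `V ≤ Y ≤ W`, `Y ≠ V`, satisfies
`μ(Y/V) ≤ μ(W/V)`.  (Subrepresentations of `W/V` correspond to such `Y`.) -/
def SubquotSemistable (θ : (Q.V → ℤ) →+ ℤ) (X : QRep Q) (V W : X.SubFam) : Prop :=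
  ∀ Y : X.SubFam, X.IsSubRep Y → V ≤ Y → Y ≤ W → Y ≠ V →
    slope θ (dimZ Y - dimZ V) ≤ slope θ (dimZ W - dimZ V)

/-- σ-semistability of the self-dual subquotient `M ∕∕ V = V^⊥/V` of a self-dual
representation `(X, B)`: every isotropic subrepresentation `W` with `V ≤ W ≤ V^⊥`,
`W ≠ V` (these correspond to the nonzero isotropic subrepresentations of `M ∕∕ V`)
satisfies `μ(W/V) ≤ 0`. -/
def SigmaSemistableQuot (σ : QInv Q) (θ : (Q.V → ℤ) →+ ℤ) (X : QRep Q) (B : X.Bilin)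
    (V : X.SubFam) : Prop :=
  ∀ W : X.SubFam, X.IsSubRep W → V ≤ W → W ≤ orthFam σ X B V →
    IsotropicFam σ X B W → W ≠ V → slope θ (dimZ W - dimZ V) ≤ 0

/-- The slope of the `k`-th subquotient of a filtration. -/
noncomputable def stepSlope (θ : (Q.V → ℤ) →+ ℤ) {X : QRep Q} (r : ℕ)
    (U : Fin (r+1) → X.SubFam) (k : Fin r) : ℚ :=
  slope θ (dimZ (U k.succ) - dimZ (U k.castSucc))

/-- `U` is the σ-Harder–Narasimhan filtration `0 = U_0 ⊂ U_1 ⊂ ⋯ ⊂ U_r ⊂ M` of the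
self-dual representation `(X, B)`: an isotropic filtration with semistable subquotients
of strictly decreasing positive slopes such that `M ∕∕ U_r` is σ-semistable. -/
def IsSigmaHN (σ : QInv Q) (θ : (Q.V → ℤ) →+ ℤ) (X : QRep Q) (B : X.Bilin)
    (r : ℕ) (U : Fin (r+1) → X.SubFam) : Prop :=
  (∀ k, X.IsSubRep (U k)) ∧
  (U 0 = ⊥) ∧
  (∀ k : Fin r, U k.castSucc ≤ U k.succ) ∧
  (∀ k : Fin r, U k.castSucc ≠ U k.succ) ∧
  (∀ k, IsotropicFam σ X B (U k)) ∧
  (∀ k : Fin r, SubquotSemistable θ X (U k.castSucc) (U k.succ)) ∧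
  (∀ k l : Fin r, k < l → stepSlope θ r U l < stepSlope θ r U k) ∧
  (∀ k : Fin r, 0 < stepSlope θ r U k) ∧
  SigmaSemistableQuot σ θ X B (U (Fin.last r))

end QRep

/-!
The orthogonal `U ↦ Uᗮ` is an inclusion-reversing involution on subrepresentations, and
σ-compatibility of `θ` gives `μ(Wᗮ/Uᗮ) = -μ(W/U)`. In particular `Y/(Y ⊓ Yᗮ)` has slope `0`, so a
semistable subquotient `Y/V` of positive slope with `Y ≤ Vᗮ` is automatically isotropic.

Existence: starting from `V = 0`, as long as `M ∕∕ V` is not σ-semistable, pass from `V` to the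
maximal destabilizing subrepresentation `Y` of `Vᗮ/V` (maximal slope, then maximal dimension);
`Y` is isotropic by the above, and the slopes strictly decrease.

Uniqueness: for a σ-HN filtration `U` of `M ∕∕ V`, the chain
`U₁ ⊂ ⋯ ⊂ U_r ⊂ U_rᗮ ⊂ ⋯ ⊂ U₁ᗮ ⊂ Vᗮ` has semistable subquotients of slopes `< μ(U₁/V)`, so `U₁` is
the maximal destabilizing subrepresentation of `Vᗮ/V`; induct on the remaining filtration of
`M ∕∕ U₁`.
-/

section Mediant

variable {K : Type*} [Field K] [LinearOrder K] [IsStrictOrderedRing K] {a b c d x : K}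

theorem add_div_add_lt (hc : 0 < c) (hd : 0 < d) (ha : a / c ≤ x) (hb : b / d < x) :
    (a + b) / (c + d) < x := by
  rw [div_le_iff₀ hc] at ha
  rw [div_lt_iff₀ hd] at hb
  rw [div_lt_iff₀ (add_pos hc hd)]
  linarith

theorem le_add_div_add (hc : 0 < c) (hd : 0 < d) (ha : x ≤ a / c) (hb : x ≤ b / d) :
    x ≤ (a + b) / (c + d) := by
  rw [le_div_iff₀ hc] at ha
  rw [le_div_iff₀ hd] at hb
  rw [le_div_iff₀ (add_pos hc hd)]
  linarith

theorem div_le_add_div_add_iff (hc : 0 < c) (hd : 0 < d) :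
    a / c ≤ (a + b) / (c + d) ↔ (a + b) / (c + d) ≤ b / d := by
  rw [div_le_div_iff₀ hc (add_pos hc hd), div_le_div_iff₀ (add_pos hc hd) hd]
  constructor <;> intro h <;> linarith

end Mediant

namespace QRep
open Module

variable {Q : FinQuiver} {M : QRep Q}

instance (X : QRep Q) : WellFoundedGT X.SubFam :=
  inferInstanceAs (WellFoundedLT (∀ i, (Submodule ℂ (X.carrier i))ᵒᵈ))

lemma isSubRep_bot : M.IsSubRep ⊥ := by
  intro a x hx
  rw [(Submodule.mem_bot ℂ).1 hx, map_zero]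
  exact zero_mem _

lemma isSubRep_sup {V W : M.SubFam} (hV : M.IsSubRep V) (hW : M.IsSubRep W) :
    M.IsSubRep (V ⊔ W) := by
  intro a x hx
  obtain ⟨v, hv, w, hw, rfl⟩ := Submodule.mem_sup.1 hx
  rw [map_add]
  exact Submodule.add_mem_sup (hV a v hv) (hW a w hw)

lemma isSubRep_inf {V W : M.SubFam} (hV : M.IsSubRep V) (hW : M.IsSubRep W) :
    M.IsSubRep (V ⊓ W) :=
  fun a x hx => ⟨hV a x hx.1, hW a x hx.2⟩

lemma exists_forall_le_comp_dimZ {γ : Type*} [LinearOrder γ] (g : (Q.V → ℤ) → γ)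
    {P : M.SubFam → Prop} {Y₀ : M.SubFam} (h₀ : P Y₀) :
    ∃ Y, P Y ∧ ∀ Z, P Z → g (dimZ Z) ≤ g (dimZ Y) := by
  have hfin : (dimZ '' {Y | P Y}).Finite := by
    refine (Set.Finite.pi fun i => Set.finite_Icc 0 (finrank ℂ (M.carrier i) : ℤ)).subset ?_
    rintro _ ⟨Y, -, rfl⟩ i -
    exact ⟨Nat.cast_nonneg _, Nat.cast_le.2 (Submodule.finrank_le (Y i))⟩
  obtain ⟨_, ⟨Y, hY, rfl⟩, hmax⟩ := Set.exists_max_image _ g hfin ⟨_, Y₀, h₀, rfl⟩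
  exact ⟨Y, hY, fun Z hZ => hmax _ ⟨Z, hZ, rfl⟩⟩

section RelSlope

variable (θ : (Q.V → ℤ) →+ ℤ)

noncomputable def relSlope (V W : M.SubFam) : ℚ := slope θ (dimZ W - dimZ V)

variable {θ} {V W Y : M.SubFam} {c : ℚ}

lemma sum_dimZ_sub_pos (h : V < W) : (0 : ℚ) < ((∑ i, (dimZ W - dimZ V) i : ℤ) : ℚ) := by
  obtain ⟨hle, i, hi⟩ := Pi.lt_def.1 h
  have hsum : ∑ j, dimZ V j < ∑ j, dimZ W j :=
    Finset.sum_lt_sum (fun j _ => Nat.cast_le.2 (Submodule.finrank_mono (hle j)))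
      ⟨i, Finset.mem_univ i, Nat.cast_lt.2 (Submodule.finrank_lt_finrank_of_lt hi)⟩
  simp only [Pi.sub_apply, Finset.sum_sub_distrib]
  exact_mod_cast sub_pos.2 hsum

lemma relSlope_eq_mediant (V Y W : M.SubFam) :
    relSlope θ V W = ((θ (dimZ Y - dimZ V) : ℚ) + θ (dimZ W - dimZ Y)) /
      (((∑ i, (dimZ Y - dimZ V) i : ℤ) : ℚ) + ((∑ i, (dimZ W - dimZ Y) i : ℤ) : ℚ)) := by
  rw [relSlope, slope, show dimZ W - dimZ V = (dimZ Y - dimZ V) + (dimZ W - dimZ Y) by abel,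
    map_add, Int.cast_add]
  simp only [Pi.add_apply, Finset.sum_add_distrib, Int.cast_add]

lemma relSlope_lt_of_le_of_lt (hVY : V < Y) (hYW : Y < W) (h₁ : relSlope θ V Y ≤ c)
    (h₂ : relSlope θ Y W < c) : relSlope θ V W < c := by
  rw [relSlope_eq_mediant V Y W]
  exact add_div_add_lt (sum_dimZ_sub_pos hVY) (sum_dimZ_sub_pos hYW) h₁ h₂

lemma le_relSlope_of_le_of_le (hVY : V < Y) (hYW : Y < W) (h₁ : c ≤ relSlope θ V Y)
    (h₂ : c ≤ relSlope θ Y W) : c ≤ relSlope θ V W := by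
  rw [relSlope_eq_mediant V Y W]
  exact le_add_div_add (sum_dimZ_sub_pos hVY) (sum_dimZ_sub_pos hYW) h₁ h₂

lemma relSlope_le_relSlope_iff (hVY : V < Y) (hYW : Y < W) :
    relSlope θ V Y ≤ relSlope θ V W ↔ relSlope θ V W ≤ relSlope θ Y W := by
  rw [relSlope_eq_mediant V Y W]
  exact div_le_add_div_add_iff (sum_dimZ_sub_pos hVY) (sum_dimZ_sub_pos hYW)

lemma relSlope_sup (V W : M.SubFam) : relSlope θ W (V ⊔ W) = relSlope θ (V ⊓ W) V := by
  rw [relSlope, relSlope]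
  congr 1
  funext i
  have := Submodule.finrank_sup_add_finrank_inf_eq (V i) (W i)
  simp only [Pi.sub_apply, dimZ, Pi.sup_apply, Pi.inf_apply]
  omega

end RelSlope

section Bounds

variable (θ : (Q.V → ℤ) →+ ℤ)

def RelSlopeLE (V T : M.SubFam) (c : ℚ) : Prop :=
  ∀ Y, M.IsSubRep Y → V < Y → Y ≤ T → relSlope θ V Y ≤ c

def RelSlopeLT (V T : M.SubFam) (c : ℚ) : Prop :=
  ∀ Y, M.IsSubRep Y → V < Y → Y ≤ T → relSlope θ V Y < c

variable {θ} {V W T Y : M.SubFam} {c d : ℚ}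

lemma SubquotSemistable.relSlopeLE (h : SubquotSemistable θ M V W) :
    RelSlopeLE θ V W (relSlope θ V W) :=
  fun Y hY hVY hYW => h Y hY hVY.le hYW hVY.ne'

lemma RelSlopeLT.relSlopeLE (h : RelSlopeLT θ V T c) : RelSlopeLE θ V T c :=
  fun Y hY hVY hYT => (h Y hY hVY hYT).le

lemma RelSlopeLE.relSlopeLT (h : RelSlopeLE θ V T c) (hcd : c < d) : RelSlopeLT θ V T d :=
  fun Y hY hVY hYT => (h Y hY hVY hYT).trans_lt hcd

lemma RelSlopeLT.mono (h : RelSlopeLT θ V T c) (hT : W ≤ T) : RelSlopeLT θ V W c :=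
  fun Y hY hVY hYW => h Y hY hVY (hYW.trans hT)

/-- The piece of `Y/V` outside `W` is `Y/(Y ⊓ W) ≅ (Y ⊔ W)/W`, whose slope is `< c`. -/
lemma relSlope_lt_of_not_le (h₁ : RelSlopeLE θ V W c) (h₂ : RelSlopeLT θ W T c)
    (hW : M.IsSubRep W) (hVW : V ≤ W) (hWT : W ≤ T) (hY : M.IsSubRep Y) (hVY : V < Y)
    (hYT : Y ≤ T) (hYW : ¬ Y ≤ W) : relSlope θ V Y < c := by
  have hWS : W < Y ⊔ W := lt_of_le_of_ne le_sup_right fun h => hYW (h ▸ le_sup_left)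
  have hout : relSlope θ (Y ⊓ W) Y < c := by
    rw [← relSlope_sup]
    exact h₂ _ (isSubRep_sup hY hW) hWS (sup_le hYT hWT)
  rcases (le_inf hVY.le hVW : V ≤ Y ⊓ W).eq_or_lt with hV | hV
  · rwa [hV]
  · exact relSlope_lt_of_le_of_lt hV (inf_lt_left.2 hYW)
      (h₁ _ (isSubRep_inf hY hW) hV inf_le_right) hout

lemma RelSlopeLE.trans (h₁ : RelSlopeLE θ V W c) (h₂ : RelSlopeLT θ W T c)
    (hW : M.IsSubRep W) (hVW : V ≤ W) (hWT : W ≤ T) : RelSlopeLE θ V T c := by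
  intro Y hY hVY hYT
  by_cases hYW : Y ≤ W
  · exact h₁ Y hY hVY hYW
  · exact (relSlope_lt_of_not_le h₁ h₂ hW hVW hWT hY hVY hYT hYW).le

lemma RelSlopeLT.trans (h₁ : RelSlopeLT θ V W c) (h₂ : RelSlopeLT θ W T c)
    (hW : M.IsSubRep W) (hVW : V ≤ W) (hWT : W ≤ T) : RelSlopeLT θ V T c := by
  intro Y hY hVY hYT
  by_cases hYW : Y ≤ W
  · exact h₁ Y hY hVY hYW
  · exact relSlope_lt_of_not_le h₁.relSlopeLE h₂ hW hVW hWT hY hVY hYT hYW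

/-- Take `Y` of maximal slope `μ(Y/V)` and, among those, of maximal dimension. -/
lemma exists_maxDestabilizing (θ : (Q.V → ℤ) →+ ℤ) (hW : M.IsSubRep W) (hVW : V < W)
    (hWT : W ≤ T) :
    ∃ Y, M.IsSubRep Y ∧ V < Y ∧ Y ≤ T ∧ RelSlopeLE θ V T (relSlope θ V Y) ∧
      RelSlopeLT θ Y T (relSlope θ V Y) := by
  obtain ⟨Y, ⟨hY, hVY, hYT⟩, hmax⟩ := exists_forall_le_comp_dimZ
    (fun d => toLex (slope θ (d - dimZ V), ∑ i, d i))
    (P := fun Z => M.IsSubRep Z ∧ V < Z ∧ Z ≤ T) ⟨hW, hVW, hWT⟩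
  have hlex : ∀ Z, M.IsSubRep Z → V < Z → Z ≤ T → relSlope θ V Z < relSlope θ V Y ∨
      relSlope θ V Z = relSlope θ V Y ∧ ∑ i, dimZ Z i ≤ ∑ i, dimZ Y i :=
    fun Z hZ hVZ hZT => Prod.Lex.le_iff.1 (hmax Z ⟨hZ, hVZ, hZT⟩)
  refine ⟨Y, hY, hVY, hYT, fun Z hZ hVZ hZT => ?_, fun Z hZ hYZ hZT => ?_⟩
  · rcases hlex Z hZ hVZ hZT with h | h
    exacts [h.le, h.1.le]
  · by_contra! hge
    have hsum : ∑ i, dimZ Y i < ∑ i, dimZ Z i := by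
      have := sum_dimZ_sub_pos hYZ
      simp only [Pi.sub_apply, Finset.sum_sub_distrib] at this
      exact sub_pos.1 (Int.cast_pos.1 this)
    rcases hlex Z hZ (hVY.trans hYZ) hZT with h | h
    · exact h.not_ge (le_relSlope_of_le_of_le hVY hYZ le_rfl hge)
    · exact h.2.not_gt hsum

end Bounds

section Orthogonal

variable {σ : QInv Q} {D : Duality Q σ} {B : M.Bilin}

local notation:max U "ᗮ" => orthFam σ M B U

lemma mem_castEquiv {i j : Q.V} (h : i = j) (U : M.SubFam) (x : M.carrier i) :
    M.castEquiv h x ∈ U j ↔ x ∈ U i := by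
  subst h; rfl

lemma single_castEquiv {i j : Q.V} (h : i = j) (x : M.carrier i) :
    Pi.single j (M.castEquiv h x) = Pi.single i x := by
  subst h; rfl

lemma mem_orthFam {U : M.SubFam} {i : Q.V} {m : M.carrier i} :
    m ∈ Uᗮ i ↔ ∀ y ∈ U (σ.onV i), B (Pi.single i m) (Pi.single (σ.onV i) y) = 0 := by
  simp only [orthFam, Submodule.mem_iInf, LinearMap.mem_ker, LinearMap.flip_apply,
    LinearMap.comp_apply, LinearMap.single_apply, Subtype.forall]

lemma orthFam_antitone : Antitone (orthFam σ M B) := by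
  intro U W h i m hm
  rw [mem_orthFam] at hm ⊢
  exact fun y hy => hm y (h _ hy)

lemma orthFam_sup (U W : M.SubFam) : (U ⊔ W)ᗮ = Uᗮ ⊓ Wᗮ := by
  refine le_antisymm (le_inf (orthFam_antitone le_sup_left) (orthFam_antitone le_sup_right)) ?_
  intro i m ⟨hU, hW⟩
  rw [SetLike.mem_coe, mem_orthFam] at hU hW
  rw [mem_orthFam]
  intro y hy
  obtain ⟨u, hu, w, hw, rfl⟩ := Submodule.mem_sup.1 hy
  rw [Pi.single_add, map_add, hU u hu, hW w hw, add_zero]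

lemma le_orthFam_orthFam (hs : sdSymm σ D M B) (U : M.SubFam) : U ≤ Uᗮᗮ := by
  intro i x hx
  rw [mem_orthFam]
  intro y hy
  rw [mem_orthFam] at hy
  have hx' := hy _ ((mem_castEquiv (σ.invV i).symm U x).2 hx)
  rw [single_castEquiv] at hx'
  rw [hs i x y, hx', mul_zero]

lemma isSubRep_orthFam (ha : sdArrow σ D M B) {U : M.SubFam} (hU : M.IsSubRep U) :
    M.IsSubRep Uᗮ := by
  intro a x hx
  rw [mem_orthFam] at hx ⊢
  intro y hy
  set w := M.map (σ.onA a) (M.castEquiv (σ.src_onA a).symm y)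
  have hw : w ∈ U (Q.tgt (σ.onA a)) :=
    hU (σ.onA a) _ ((mem_castEquiv (σ.src_onA a).symm U y).2 hy)
  rw [ha a x y, ← single_castEquiv (σ.tgt_onA a) w,
    hx _ ((mem_castEquiv (σ.tgt_onA a) U w).2 hw), mul_zero]

noncomputable def pairing (σ : QInv Q) (B : M.Bilin) (i : Q.V) :
    M.carrier i →ₗ[ℂ] Module.Dual ℂ (M.carrier (σ.onV i)) :=
  (B.comp (LinearMap.single ℂ M.carrier i)).compl₂ (LinearMap.single ℂ M.carrier (σ.onV i))

lemma pairing_injective (hnd : Nondeg M B) (hbl : sdOrthBlocks σ M B) (i : Q.V) :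
    Function.Injective (pairing σ B i) := by
  rw [← LinearMap.ker_eq_bot, LinearMap.ker_eq_bot']
  intro x hx
  have hpair : ∀ z, B (Pi.single i x) z = 0 := by
    intro z
    rw [← Finset.univ_sum_single z, map_sum]
    refine Finset.sum_eq_zero fun j _ => ?_
    by_cases hj : j = σ.onV i
    · subst hj
      exact LinearMap.congr_fun hx (z (σ.onV i))
    · exact hbl i j hj x (z j)
  simpa using congrFun (hnd _ hpair) i

lemma finrank_carrier_onV (hnd : Nondeg M B) (hbl : sdOrthBlocks σ M B) (i : Q.V) :
    finrank ℂ (M.carrier (σ.onV i)) = finrank ℂ (M.carrier i) := by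
  have hle : ∀ j, finrank ℂ (M.carrier j) ≤ finrank ℂ (M.carrier (σ.onV j)) := fun j => by
    simpa only [Subspace.dual_finrank_eq] using
      LinearMap.finrank_le_finrank_of_injective (pairing_injective hnd hbl j)
  have := hle (σ.onV i)
  rw [σ.invV] at this
  exact this.antisymm (hle i)

lemma finrank_orthFam_add (hnd : Nondeg M B) (hbl : sdOrthBlocks σ M B) (U : M.SubFam)
    (i : Q.V) : finrank ℂ (Uᗮ i) + finrank ℂ (U (σ.onV i)) = finrank ℂ (M.carrier i) := by
  let ψ := (U (σ.onV i)).subtype.dualMap ∘ₗ pairing σ B i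
  have hker : LinearMap.ker ψ = Uᗮ i := by
    ext m
    rw [LinearMap.mem_ker, mem_orthFam, LinearMap.ext_iff, Subtype.forall]
    rfl
  have hsurj : Function.Surjective ψ := by
    refine (LinearMap.dualMap_surjective_of_injective (Submodule.injective_subtype _)).comp ?_
    refine (LinearMap.injective_iff_surjective_of_finrank_eq_finrank ?_).1
      (pairing_injective hnd hbl i)
    rw [Subspace.dual_finrank_eq, finrank_carrier_onV hnd hbl]
  have := LinearMap.finrank_range_add_finrank_ker ψ
  rw [hker, LinearMap.range_eq_top.2 hsurj, finrank_top, Subspace.dual_finrank_eq] at this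
  omega

lemma orthFam_orthFam (hB : IsSelfDualForm σ D M B) (U : M.SubFam) : Uᗮᗮ = U := by
  funext i
  refine (Submodule.eq_of_le_of_finrank_le (le_orthFam_orthFam hB.2.2.1 U i) ?_).symm
  have h₁ := finrank_orthFam_add hB.1 hB.2.1 Uᗮ i
  have h₂ := finrank_orthFam_add hB.1 hB.2.1 U (σ.onV i)
  have h₃ := finrank_carrier_onV hB.1 hB.2.1 i
  rw [σ.invV] at h₂
  omega

lemma orthFam_strictAnti (hB : IsSelfDualForm σ D M B) : StrictAnti (orthFam σ M B) :=
  orthFam_antitone.strictAnti_of_injective (Function.LeftInverse.injective (orthFam_orthFam hB))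

lemma le_orthFam_comm (hB : IsSelfDualForm σ D M B) {U W : M.SubFam} :
    U ≤ Wᗮ ↔ W ≤ Uᗮ := by
  constructor <;> intro h <;>
    simpa only [orthFam_orthFam hB] using orthFam_antitone (σ := σ) (B := B) h

lemma relSlope_orthFam {θ : (Q.V → ℤ) →+ ℤ} (hθ : SigmaCompatible σ θ) (hnd : Nondeg M B)
    (hbl : sdOrthBlocks σ M B) (U W : M.SubFam) :
    relSlope θ Wᗮ Uᗮ = -relSlope θ U W := by
  have hdim : dimZ Uᗮ - dimZ Wᗮ = fun i => (dimZ W - dimZ U) (σ.onV i) := by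
    funext i
    have := finrank_orthFam_add hnd hbl U i
    have := finrank_orthFam_add hnd hbl W i
    simp only [Pi.sub_apply, dimZ]
    omega
  have hsum : ∑ i, (dimZ W - dimZ U) (σ.onV i) = ∑ i, (dimZ W - dimZ U) i :=
    Fintype.sum_equiv ⟨σ.onV, σ.onV, σ.invV, σ.invV⟩ _ _ fun _ => rfl
  rw [relSlope, relSlope, slope, slope, hdim, hθ, hsum, Int.cast_neg, neg_div]

/-- `Y/(Y ⊓ Yᗮ)` is dual to `(Y ⊔ Yᗮ)/Yᗮ ≅ Y/(Y ⊓ Yᗮ)`, so its slope is its own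
negative. -/
lemma relSlope_inf_orthFam {θ : (Q.V → ℤ) →+ ℤ} (hθ : SigmaCompatible σ θ)
    (hB : IsSelfDualForm σ D M B) (Y : M.SubFam) : relSlope θ (Y ⊓ Yᗮ) Y = 0 := by
  have h := relSlope_orthFam hθ hB.1 hB.2.1 Yᗮ (Y ⊔ Yᗮ)
  rw [orthFam_sup, orthFam_orthFam hB, inf_comm, relSlope_sup] at h
  linarith

lemma SubquotSemistable.orthFam {θ : (Q.V → ℤ) →+ ℤ} (hθ : SigmaCompatible σ θ)
    (hB : IsSelfDualForm σ D M B) {U W : M.SubFam} (h : SubquotSemistable θ M U W) :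
    SubquotSemistable θ M Wᗮ Uᗮ := by
  intro Y hY hWY hYU hYW
  rcases hYU.eq_or_lt with rfl | hYU
  · exact le_rfl
  have hUY : U < Yᗮ := by simpa only [orthFam_orthFam hB] using orthFam_strictAnti hB hYU
  have hYW : Yᗮ < W := by
    simpa only [orthFam_orthFam hB] using orthFam_strictAnti hB (lt_of_le_of_ne hWY hYW.symm)
  have hbound := h _ (isSubRep_orthFam hB.2.2.2 hY) hUY.le hYW.le hUY.ne'
  have hY' := relSlope_orthFam hθ hB.1 hB.2.1 Yᗮ W
  rw [orthFam_orthFam hB] at hY'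
  change relSlope θ Wᗮ Y ≤ relSlope θ Wᗮ Uᗮ
  rw [hY', relSlope_orthFam hθ hB.1 hB.2.1, neg_le_neg_iff]
  exact (relSlope_le_relSlope_iff hUY hYW).1 hbound

/-- Otherwise `Y/(Y ⊓ Yᗮ)` has slope `0`, and the seesaw makes `(Y ⊓ Yᗮ)/V` destabilize
`Y/V`. -/
lemma isotropicFam_of_subquotSemistable {θ : (Q.V → ℤ) →+ ℤ} (hθ : SigmaCompatible σ θ)
    (hB : IsSelfDualForm σ D M B) {V Y : M.SubFam} (hY : M.IsSubRep Y) (hVY : V < Y)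
    (hYV : Y ≤ Vᗮ) (hss : SubquotSemistable θ M V Y) (hpos : 0 < relSlope θ V Y) :
    IsotropicFam σ M B Y := by
  by_contra hiso
  have hVZ : V ≤ Y ⊓ Yᗮ := le_inf hVY.le ((le_orthFam_comm hB).1 hYV)
  have hzero := relSlope_inf_orthFam hθ hB Y
  rcases hVZ.eq_or_lt with hVZ | hVZ
  · rw [← hVZ] at hzero
    exact hpos.ne' hzero
  · have hZY : Y ⊓ Yᗮ < Y := inf_lt_left.2 hiso
    have hle : relSlope θ V (Y ⊓ Yᗮ) ≤ relSlope θ V Y :=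
      hss _ (isSubRep_inf hY (isSubRep_orthFam hB.2.2.2 hY)) hVZ.le inf_le_left hVZ.ne'
    rw [relSlope_le_relSlope_iff hVZ hZY, hzero] at hle
    exact hle.not_gt hpos

lemma relSlopeLE_orthFam_of_sigmaSemistableQuot {θ : (Q.V → ℤ) →+ ℤ}
    (hθ : SigmaCompatible σ θ) (hB : IsSelfDualForm σ D M B) {V : M.SubFam}
    (hq : SigmaSemistableQuot σ θ M B V) : RelSlopeLE θ V Vᗮ 0 := by
  intro Y₀ hY₀ hVY₀ hY₀V
  by_contra! hpos₀
  obtain ⟨Y, ⟨hY, hVY, hYV⟩, hmax⟩ := exists_forall_le_comp_dimZ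
    (fun d => slope θ (d - dimZ V)) (P := fun Z => M.IsSubRep Z ∧ V < Z ∧ Z ≤ Vᗮ)
    ⟨hY₀, hVY₀, hY₀V⟩
  have hpos : 0 < relSlope θ V Y := hpos₀.trans_le (hmax Y₀ ⟨hY₀, hVY₀, hY₀V⟩)
  have hss : SubquotSemistable θ M V Y := fun Z hZ hVZ hZY hZV =>
    hmax Z ⟨hZ, lt_of_le_of_ne hVZ hZV.symm, hZY.trans hYV⟩
  have hiso := isotropicFam_of_subquotSemistable hθ hB hY hVY hYV hss hpos
  exact (hq Y hY hVY.le hYV hiso hVY.ne').not_gt hpos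

end Orthogonal

section SigmaHN

variable {σ : QInv Q} {D : Duality Q σ} {θ : (Q.V → ℤ) →+ ℤ} {B : M.Bilin}

local notation:max U "ᗮ" => orthFam σ M B U

/-- `U` is the σ-Harder–Narasimhan filtration of `M ∕∕ V`, pulled back to `M`. -/
structure IsSigmaHNFrom (σ : QInv Q) (θ : (Q.V → ℤ) →+ ℤ) (B : M.Bilin) (V : M.SubFam)
    (r : ℕ) (U : Fin (r + 1) → M.SubFam) : Prop where
  isSubRep : ∀ k, M.IsSubRep (U k)
  zero : U 0 = V
  strictMono : StrictMono U
  isotropic : ∀ k, IsotropicFam σ M B (U k)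
  semistable : ∀ k : Fin r, SubquotSemistable θ M (U k.castSucc) (U k.succ)
  strictAnti : StrictAnti (stepSlope θ r U)
  pos : ∀ k, 0 < stepSlope θ r U k
  quot : SigmaSemistableQuot σ θ M B (U (Fin.last r))

variable {V : M.SubFam} {r : ℕ}

lemma isSigmaHN_iff {U : Fin (r + 1) → M.SubFam} :
    IsSigmaHN σ θ M B r U ↔ IsSigmaHNFrom σ θ B ⊥ r U := by
  constructor
  · rintro ⟨hsub, hzero, hle, hne, hiso, hss, hanti, hpos, hq⟩
    exact ⟨hsub, hzero, Fin.strictMono_iff_lt_succ.2 fun k => lt_of_le_of_ne (hle k) (hne k),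
      hiso, hss, fun _ _ h => hanti _ _ h, hpos, hq⟩
  · intro h
    exact ⟨h.isSubRep, h.zero, fun k => (h.strictMono k.castSucc_lt_succ).le,
      fun k => (h.strictMono k.castSucc_lt_succ).ne, h.isotropic, h.semistable,
      fun _ _ hkl => h.strictAnti hkl, h.pos, h.quot⟩

lemma stepSlope_cons_zero (V : M.SubFam) (U : Fin (r + 1) → M.SubFam) :
    stepSlope θ (r + 1) (Fin.cons V U : Fin (r + 2) → M.SubFam) 0 = relSlope θ V (U 0) :=
  rfl

lemma stepSlope_cons_succ (V : M.SubFam) (U : Fin (r + 1) → M.SubFam) (k : Fin r) :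
    stepSlope θ (r + 1) (Fin.cons V U : Fin (r + 2) → M.SubFam) k.succ = stepSlope θ r U k := by
  rw [stepSlope, stepSlope, ← Fin.succ_castSucc, Fin.cons_succ, Fin.cons_succ]

lemma IsSigmaHNFrom.of_sigmaSemistableQuot (hV : M.IsSubRep V)
    (hiso : IsotropicFam σ M B V) (hq : SigmaSemistableQuot σ θ M B V) :
    IsSigmaHNFrom σ θ B V 0 fun _ => V where
  isSubRep _ := hV
  zero := rfl
  strictMono := Subsingleton.strictMono (α := Fin 1) _
  isotropic _ := hiso
  semistable k := k.elim0
  strictAnti := Subsingleton.strictAnti (α := Fin 0) _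
  pos k := k.elim0
  quot := hq

lemma IsSigmaHNFrom.cons {Y : M.SubFam} {U : Fin (r + 1) → M.SubFam}
    (h : IsSigmaHNFrom σ θ B Y r U) (hV : M.IsSubRep V) (hiso : IsotropicFam σ M B V)
    (hVY : V < Y) (hss : SubquotSemistable θ M V Y) (hpos : 0 < relSlope θ V Y)
    (hlt : ∀ k, stepSlope θ r U k < relSlope θ V Y) :
    IsSigmaHNFrom σ θ B V (r + 1) (Fin.cons V U) where
  isSubRep := Fin.cases hV h.isSubRep
  zero := rfl
  strictMono := strictMono_vecCons.2 ⟨h.zero ▸ hVY, h.strictMono⟩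
  isotropic := Fin.cases hiso h.isotropic
  semistable := Fin.cases
    (by rw [Fin.castSucc_zero, Fin.cons_zero, Fin.cons_succ, h.zero]; exact hss)
    fun k => by
      rw [← Fin.succ_castSucc, Fin.cons_succ, Fin.cons_succ]
      exact h.semistable k
  strictAnti := by
    intro k l hkl
    induction l using Fin.cases with
    | zero => exact absurd hkl (Fin.not_lt_zero k)
    | succ l =>
      induction k using Fin.cases with
      | zero => rw [stepSlope_cons_zero, stepSlope_cons_succ, h.zero]; exact hlt l
      | succ k =>
        rw [stepSlope_cons_succ, stepSlope_cons_succ]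
        exact h.strictAnti (Fin.succ_lt_succ_iff.1 hkl)
  pos := Fin.cases (by rw [stepSlope_cons_zero, h.zero]; exact hpos)
    fun k => by rw [stepSlope_cons_succ]; exact h.pos k
  quot := by
    rw [← Fin.succ_last, Fin.cons_succ]
    exact h.quot

lemma stepSlope_tail (U : Fin (r + 2) → M.SubFam) (k : Fin r) :
    stepSlope θ r (Fin.tail U) k = stepSlope θ (r + 1) U k.succ := by
  rw [stepSlope, stepSlope, ← Fin.succ_castSucc]
  rfl

lemma IsSigmaHNFrom.tail {U : Fin (r + 2) → M.SubFam}
    (h : IsSigmaHNFrom σ θ B V (r + 1) U) : IsSigmaHNFrom σ θ B (U 1) r (Fin.tail U) where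
  isSubRep k := h.isSubRep k.succ
  zero := congrArg U Fin.succ_zero_eq_one
  strictMono := h.strictMono.comp Fin.strictMono_succ
  isotropic k := h.isotropic k.succ
  semistable k := by
    have := h.semistable k.succ
    rwa [← Fin.succ_castSucc] at this
  strictAnti k l hkl := by
    rw [stepSlope_tail, stepSlope_tail]
    exact h.strictAnti (Fin.succ_lt_succ_iff.2 hkl)
  pos k := by
    rw [stepSlope_tail]
    exact h.pos k.succ
  quot := by
    have := h.quot
    rwa [← Fin.succ_last] at this

lemma IsSigmaHNFrom.le_orthFam {U : Fin (r + 1) → M.SubFam} (h : IsSigmaHNFrom σ θ B V r U)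
    (k : Fin (r + 1)) : U k ≤ Vᗮ :=
  (h.isotropic k).trans (orthFam_antitone (h.zero ▸ h.strictMono.monotone (Fin.zero_le k)))

lemma IsSigmaHNFrom.sigmaSemistableQuot {U : Fin 1 → M.SubFam}
    (h : IsSigmaHNFrom σ θ B V 0 U) : SigmaSemistableQuot σ θ M B V :=
  h.zero ▸ h.quot

section FirstStep

variable {U : Fin (r + 2) → M.SubFam}

lemma IsSigmaHNFrom.lt_one (h : IsSigmaHNFrom σ θ B V (r + 1) U) : V < U 1 :=
  h.zero ▸ h.strictMono Fin.zero_lt_one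

lemma IsSigmaHNFrom.stepSlope_zero (h : IsSigmaHNFrom σ θ B V (r + 1) U) :
    stepSlope θ (r + 1) U 0 = relSlope θ V (U 1) := by
  rw [stepSlope, Fin.castSucc_zero, Fin.succ_zero_eq_one, h.zero]
  rfl

lemma IsSigmaHNFrom.relSlope_one_pos (h : IsSigmaHNFrom σ θ B V (r + 1) U) :
    0 < relSlope θ V (U 1) :=
  h.stepSlope_zero ▸ h.pos 0

lemma IsSigmaHNFrom.semistable_zero (h : IsSigmaHNFrom σ θ B V (r + 1) U) :
    SubquotSemistable θ M V (U 1) := by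
  have := h.semistable 0
  rwa [Fin.castSucc_zero, Fin.succ_zero_eq_one, h.zero] at this

lemma IsSigmaHNFrom.not_sigmaSemistableQuot (h : IsSigmaHNFrom σ θ B V (r + 1) U) :
    ¬ SigmaSemistableQuot σ θ M B V := fun hq =>
  (hq _ (h.isSubRep 1) h.lt_one.le (h.le_orthFam 1) (h.isotropic 1) h.lt_one.ne').not_gt
    h.relSlope_one_pos

lemma IsSigmaHNFrom.relSlopeLT_orthFam_one (hθ : SigmaCompatible σ θ)
    (hB : IsSelfDualForm σ D M B) (h : IsSigmaHNFrom σ θ B V (r + 1) U) {c : ℚ} (hc : 0 < c) :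
    RelSlopeLT θ (U 1)ᗮ Vᗮ c := by
  refine (h.semistable_zero.orthFam hθ hB).relSlopeLE.relSlopeLT ?_
  rw [relSlope_orthFam hθ hB.1 hB.2.1, neg_lt]
  exact (neg_neg_of_pos hc).trans h.relSlope_one_pos

end FirstStep

/-- The subquotients of `V ⊂ U₁ ⊂ ⋯ ⊂ U_r ⊂ U_rᗮ ⊂ ⋯ ⊂ U₁ᗮ ⊂ Vᗮ` are semistable of slopes
`μ₁ > ⋯ > μ_r > 0 > -μ_r > ⋯ > -μ₁`, except `U_rᗮ/U_r`, whose subrepresentations have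
slope `≤ 0` by σ-semistability of `M ∕∕ U_r`. -/
lemma IsSigmaHNFrom.relSlopeLT_orthFam (hθ : SigmaCompatible σ θ)
    (hB : IsSelfDualForm σ D M B) {U : Fin (r + 1) → M.SubFam}
    (h : IsSigmaHNFrom σ θ B V r U) {c : ℚ} (hc : 0 < c) (hlt : ∀ k, stepSlope θ r U k < c) :
    RelSlopeLT θ V Vᗮ c := by
  induction r generalizing V with
  | zero =>
    exact (relSlopeLE_orthFam_of_sigmaSemistableQuot hθ hB h.sigmaSemistableQuot).relSlopeLT hc
  | succ r ih =>
    have hsub := h.isSubRep 1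
    have hbelow : RelSlopeLT θ V (U 1) c :=
      h.semistable_zero.relSlopeLE.relSlopeLT (h.stepSlope_zero ▸ hlt 0)
    have habove : RelSlopeLT θ (U 1) (U 1)ᗮ c :=
      ih h.tail fun k => stepSlope_tail U k ▸ hlt k.succ
    exact hbelow.trans (habove.trans (h.relSlopeLT_orthFam_one hθ hB hc)
      (isSubRep_orthFam hB.2.2.2 hsub) (h.isotropic 1) (orthFam_antitone h.lt_one.le))
      hsub h.lt_one.le (h.le_orthFam 1)

lemma IsSigmaHNFrom.relSlopeLT_one (hθ : SigmaCompatible σ θ) (hB : IsSelfDualForm σ D M B)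
    {U : Fin (r + 2) → M.SubFam} (h : IsSigmaHNFrom σ θ B V (r + 1) U) : RelSlopeLT θ (U 1) Vᗮ (relSlope θ V (U 1)) := by
  have habove : RelSlopeLT θ (U 1) (U 1)ᗮ (relSlope θ V (U 1)) :=
    h.tail.relSlopeLT_orthFam hθ hB h.relSlope_one_pos fun k => by
      rw [stepSlope_tail, ← h.stepSlope_zero]
      exact h.strictAnti k.succ_pos
  exact habove.trans (h.relSlopeLT_orthFam_one hθ hB h.relSlope_one_pos)
    (isSubRep_orthFam hB.2.2.2 (h.isSubRep 1)) (h.isotropic 1) (orthFam_antitone h.lt_one.le)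

/-- `U 1` is the maximal destabilizing subrepresentation of `Vᗮ/V`. -/
lemma IsSigmaHNFrom.one_le_one (hθ : SigmaCompatible σ θ) (hB : IsSelfDualForm σ D M B)
    {r' : ℕ} {U : Fin (r + 2) → M.SubFam} {U' : Fin (r' + 2) → M.SubFam}
    (h : IsSigmaHNFrom σ θ B V (r + 1) U)
    (h' : IsSigmaHNFrom σ θ B V (r' + 1) U') : U' 1 ≤ U 1 := by
  have hsub := h.isSubRep 1
  have hbelow := h.semistable_zero.relSlopeLE
  by_contra hle
  have hlt := relSlope_lt_of_not_le hbelow (h.relSlopeLT_one hθ hB) hsub h.lt_one.le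
    (h.le_orthFam 1) (h'.isSubRep 1) h'.lt_one (h'.le_orthFam 1) hle
  have hge := (h'.semistable_zero.relSlopeLE.trans (h'.relSlopeLT_one hθ hB) (h'.isSubRep 1)
    h'.lt_one.le (h'.le_orthFam 1)) _ hsub h.lt_one (h.le_orthFam 1)
  exact hlt.not_ge hge

theorem IsSigmaHNFrom.unique (hθ : SigmaCompatible σ θ) (hB : IsSelfDualForm σ D M B)
    {r' : ℕ} {U : Fin (r + 1) → M.SubFam} {U' : Fin (r' + 1) → M.SubFam}
    (h : IsSigmaHNFrom σ θ B V r U) (h' : IsSigmaHNFrom σ θ B V r' U') :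
    (⟨r, U⟩ : Σ n, Fin (n + 1) → M.SubFam) = ⟨r', U'⟩ := by
  induction r generalizing V r' U' with
  | zero =>
    cases r' with
    | zero =>
      obtain rfl : U = U' := funext fun k => by rw [Fin.fin_one_eq_zero k, h.zero, h'.zero]
      rfl
    | succ r' => exact absurd h.sigmaSemistableQuot h'.not_sigmaSemistableQuot
  | succ r ih =>
    cases r' with
    | zero => exact absurd h'.sigmaSemistableQuot h.not_sigmaSemistableQuot
    | succ r' =>
      have hone : U 1 = U' 1 := (h'.one_le_one hθ hB h).antisymm (h.one_le_one hθ hB h')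
      obtain ⟨rfl, htail⟩ := Sigma.mk.inj_iff.1 (ih h.tail (hone ▸ h'.tail))
      rw [← Fin.cons_self_tail U, ← Fin.cons_self_tail U', eq_of_heq htail, h.zero, h'.zero]

lemma IsSigmaHNFrom.stepSlope_lt {U : Fin (r + 1) → M.SubFam}
    (h : IsSigmaHNFrom σ θ B V r U) {c : ℚ} (hc : RelSlopeLT θ V Vᗮ c) (k : Fin r) :
    stepSlope θ r U k < c := by
  obtain ⟨r, rfl⟩ := Nat.exists_eq_add_one.2 k.pos
  calc stepSlope θ (r + 1) U k ≤ stepSlope θ (r + 1) U 0 :=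
        h.strictAnti.antitone (Fin.zero_le k)
    _ = relSlope θ V (U 1) := h.stepSlope_zero
    _ < c := hc _ (h.isSubRep 1) h.lt_one (h.le_orthFam 1)

theorem exists_isSigmaHNFrom (hθ : SigmaCompatible σ θ) (hB : IsSelfDualForm σ D M B)
    (V : M.SubFam) (hV : M.IsSubRep V) (hiso : IsotropicFam σ M B V) :
    ∃ r U, IsSigmaHNFrom σ θ B V r U := by
  induction V using WellFoundedGT.induction with
  | _ V ih =>
    by_cases hq : SigmaSemistableQuot σ θ M B V
    · exact ⟨0, _, .of_sigmaSemistableQuot hV hiso hq⟩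
    obtain ⟨W, hW, hVW, hWV, -, hWne, hWpos⟩ : ∃ W, M.IsSubRep W ∧ V ≤ W ∧ W ≤ Vᗮ ∧
        IsotropicFam σ M B W ∧ W ≠ V ∧ 0 < relSlope θ V W := by
      simpa [SigmaSemistableQuot, relSlope] using hq
    obtain ⟨Y, hY, hVY, hYV, hmax, hlater⟩ :=
      exists_maxDestabilizing θ hW (lt_of_le_of_ne hVW hWne.symm) hWV
    have hss : SubquotSemistable θ M V Y := fun Z hZ hVZ hZY hZV =>
      hmax Z hZ (lt_of_le_of_ne hVZ hZV.symm) (hZY.trans hYV)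
    have hpos : 0 < relSlope θ V Y :=
      hWpos.trans_le (hmax W hW (lt_of_le_of_ne hVW hWne.symm) hWV)
    have hYiso := isotropicFam_of_subquotSemistable hθ hB hY hVY hYV hss hpos
    obtain ⟨r, U, hU⟩ := ih Y hVY hY hYiso
    exact ⟨r + 1, _, hU.cons hV hiso hVY hss hpos
      (hU.stepSlope_lt (hlater.mono (orthFam_antitone hVY.le)))⟩

end SigmaHN

end QRep

/-- Every self-dual representation `M` of a quiver with involution,
duality structure and σ-compatible stability admits a unique σ-Harder–Narasimhan
filtration `0 = U_0 ⊂ U_1 ⊂ ⋯ ⊂ U_r ⊂ M` (uniqueness includes uniqueness of the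
length `r`). -/
theorem existsUnique_sigmaHN (Q : FinQuiver) (σ : QInv Q) (D : Duality Q σ)
    (θ : (Q.V → ℤ) →+ ℤ) (hθ : QRep.SigmaCompatible σ θ)
    (M : QRep Q) (B : M.Bilin) (hB : QRep.IsSelfDualForm σ D M B) :
    ∃! F : Σ r : ℕ, (Fin (r+1) → M.SubFam),
      QRep.IsSigmaHN σ θ M B F.1 F.2 := by
  obtain ⟨r, U, hU⟩ := QRep.exists_isSigmaHNFrom hθ hB ⊥ QRep.isSubRep_bot bot_le
  refine ⟨⟨r, U⟩, QRep.isSigmaHN_iff.2 hU, fun F hF => ?_⟩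
  exact QRep.IsSigmaHNFrom.unique hθ hB (QRep.isSigmaHN_iff.1 hF) hU
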